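/- The standard contact structure ξ₀ = ker(dz + ρ² dφ) and the overtwisted contact structure ξ₁ = ker(cos ρ dz + ρ sin ρ dφ) on ℝ³ are homotopic through contact structures: there exists a smooth family of 1-forms β_u on ℝ³, u ∈ [0, 1], such that β_u ∧ dβ_u is nowhere vanishing for every u, ker β₀ = ξ₀ and ker β₁ = ξ₁. Consequently the symplectic forms d(e^t β_u) on ℝ⁴ ≅ ℝ³ × ℝ(t) give a path of exact symplectic forms joining a symplectic form defining the standard structure to the exotic symplectic form d(e^t β₁). -/

import Mathlib

/-!
STATEMENT 16: The standard contact structure ξ₀ = ker(dz + ρ²dφ) and the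
overtwisted structure ξ₁ = ker(cos ρ dz + ρ sin ρ dφ) on ℝ³ are homotopic through
contact structures: there is a smooth family of contact forms β_u, u ∈ [0,1],
with ker β₀ = ξ₀ and ker β₁ = ξ₁. Consequently the forms d(e^t β_u) give a path
of exact symplectic forms on ℝ⁴ joining a form defining the standard structure to
the exotic symplectic form d(e^t β₁).
-/

noncomputable section

abbrev V3 : Type := Fin 3 → ℝ

def e3 (i : Fin 3) : V3 := Pi.single i 1

def d2 {E : Type*} [NormedAddCommGroup E] [NormedSpace ℝ E]
    (α : E → E →L[ℝ] ℝ) (x v w : E) : ℝ :=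
  fderiv ℝ α x v w - fderiv ℝ α x w v

/-- value of α ∧ dα on the standard basis of ℝ³ -/
def c3 (α : V3 → V3 →L[ℝ] ℝ) (p : V3) : ℝ :=
  α p (e3 0) * d2 α p (e3 1) (e3 2)
    - α p (e3 1) * d2 α p (e3 0) (e3 2)
    + α p (e3 2) * d2 α p (e3 0) (e3 1)

/-- the standard contact form α₀ = dz + ρ²dφ = dz + x dy - y dx on ℝ³ -/
def alpha0 : V3 → V3 →L[ℝ] ℝ := fun p =>
  (ContinuousLinearMap.proj 2 : V3 →L[ℝ] ℝ)
    + p 0 • (ContinuousLinearMap.proj 1 : V3 →L[ℝ] ℝ)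
    - p 1 • (ContinuousLinearMap.proj 0 : V3 →L[ℝ] ℝ)

/-- sin r / r, extended by 1 at r = 0 -/
def sinc (r : ℝ) : ℝ := if r = 0 then 1 else Real.sin r / r

/-- the overtwisted contact form α₁ = cos ρ dz + ρ sin ρ dφ on ℝ³ -/
def alpha1 : V3 → V3 →L[ℝ] ℝ := fun p =>
  Real.cos (Real.sqrt (p 0 ^ 2 + p 1 ^ 2)) • (ContinuousLinearMap.proj 2 : V3 →L[ℝ] ℝ)
    + sinc (Real.sqrt (p 0 ^ 2 + p 1 ^ 2)) •
        (p 0 • (ContinuousLinearMap.proj 1 : V3 →L[ℝ] ℝ)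
          - p 1 • (ContinuousLinearMap.proj 0 : V3 →L[ℝ] ℝ))

/-- the Liouville form e^t β on ℝ³ × ℝ(t); `d2` of it is d(e^t β) -/
def sympl1 (β : V3 → V3 →L[ℝ] ℝ) : (V3 × ℝ) → (V3 × ℝ) →L[ℝ] ℝ :=
  fun q => Real.exp q.2 • ((β q.1).comp (ContinuousLinearMap.fst ℝ V3 ℝ))

/-- the standard basis of ℝ³ × ℝ -/
def b4 (j : Fin 4) : V3 × ℝ :=
  if h : (j : ℕ) < 3 then (Pi.single (⟨j.1, h⟩ : Fin 3) 1, 0) else (0, 1)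

/-- value of ω ∧ ω on the standard basis of ℝ⁴ ≅ ℝ³ × ℝ, for ω = d2 Λ,
up to a positive factor: nonvanishing means ω is symplectic -/
def symp4val (Λ : (V3 × ℝ) → (V3 × ℝ) →L[ℝ] ℝ) (z : V3 × ℝ) : ℝ :=
  d2 Λ z (b4 0) (b4 1) * d2 Λ z (b4 2) (b4 3)
    - d2 Λ z (b4 0) (b4 2) * d2 Λ z (b4 1) (b4 3)
    + d2 Λ z (b4 0) (b4 3) * d2 Λ z (b4 1) (b4 2)


open FormalMultilinearSeries


lemma analyticOnNhd_ofScalarsSum {c : ℕ → ℝ} (h : ∀ n, ‖c n‖ ≤ (Nat.factorial n : ℝ)⁻¹) :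
    AnalyticOnNhd ℝ (ofScalarsSum (E := ℝ) c) Set.univ := by
  have hr : (ofScalars ℝ c).radius = ⊤ := by
    apply FormalMultilinearSeries.radius_eq_top_of_summable_norm
    intro r
    apply Summable.of_nonneg_of_le (fun n => by positivity)
      (fun n => ?_) (Real.summable_pow_div_factorial r)
    rw [ofScalars_norm, div_eq_inv_mul]
    exact mul_le_mul_of_nonneg_right (h n) (pow_nonneg r.coe_nonneg n)
  have h0 : HasFPowerSeriesOnBall (ofScalars ℝ c).sum (ofScalars ℝ c) 0 ⊤ := by
    have := (ofScalars ℝ c).hasFPowerSeriesOnBall (F := ℝ)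
      (by rw [hr]; exact ENNReal.zero_lt_top)
    rwa [hr] at this
  have h1 := h0.analyticOnNhd
  rwa [Metric.emetric_ball_top] at h1

def Cf : ℝ → ℝ := ofScalarsSum (E := ℝ) (fun n => ((-1:ℝ))^n / (Nat.factorial (2*n)))
def Sf : ℝ → ℝ := ofScalarsSum (E := ℝ) (fun n => ((-1:ℝ))^n / (Nat.factorial (2*n+1)))

lemma Cf_analytic : AnalyticOnNhd ℝ Cf Set.univ := by
  apply analyticOnNhd_ofScalarsSum
  intro n
  rw [norm_div, norm_pow, norm_neg, norm_one, one_pow, Real.norm_natCast, one_div]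
  apply inv_anti₀ (by positivity)
  exact_mod_cast Nat.factorial_le (by omega)

lemma Sf_analytic : AnalyticOnNhd ℝ Sf Set.univ := by
  apply analyticOnNhd_ofScalarsSum
  intro n
  rw [norm_div, norm_pow, norm_neg, norm_one, one_pow, Real.norm_natCast, one_div]
  apply inv_anti₀ (by positivity)
  exact_mod_cast Nat.factorial_le (by omega)

lemma Cf_sq (r : ℝ) : Cf (r^2) = Real.cos r := by
  rw [Real.cos_eq_tsum, Cf, ofScalarsSum_eq_tsum]
  apply tsum_congr
  intro n
  rw [smul_eq_mul, pow_mul]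
  ring

lemma Sf_sq (r : ℝ) : r * Sf (r^2) = Real.sin r := by
  rw [Real.sin_eq_tsum, Sf, ofScalarsSum_eq_tsum, ← tsum_mul_left]
  apply tsum_congr
  intro n
  rw [smul_eq_mul]
  rw [show r ^ (2*n+1) = (r^2)^n * r by rw [pow_succ, pow_mul]]
  ring

lemma Sf_zero : Sf 0 = 1 := by
  rw [Sf, ofScalarsSum_eq_tsum]
  simp only []
  rw [tsum_eq_single 0 (fun n hn => by simp [zero_pow hn])]
  norm_num

lemma Cf_zero : Cf 0 = 1 := by
  have := Cf_sq 0
  simpa using this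

attribute [irreducible] Cf Sf

lemma Cf_pos_eq {s : ℝ} (hs : 0 < s) : Cf s = Real.cos (Real.sqrt s) := by
  have := Cf_sq (Real.sqrt s)
  rwa [Real.sq_sqrt hs.le] at this

lemma Sf_pos_eq {s : ℝ} (hs : 0 < s) : Sf s = Real.sin (Real.sqrt s) / Real.sqrt s := by
  have h0 : Real.sqrt s ≠ 0 := (Real.sqrt_pos.2 hs).ne'
  have := Sf_sq (Real.sqrt s)
  rw [Real.sq_sqrt hs.le] at this
  rw [eq_div_iff h0, mul_comm]
  exact this

lemma deriv_Cf (s : ℝ) : deriv Cf s = -(1/2) * Sf s := by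
  have h := AnalyticOnNhd.eqOn_of_preconnected_of_eventuallyEq
    (Cf_analytic.deriv) ((analyticOnNhd_const (v := -(1/2:ℝ))).mul Sf_analytic)
    isPreconnected_univ (Set.mem_univ (1:ℝ)) ?_
  · exact h (Set.mem_univ s)
  · have hmem : Set.Ioi (0:ℝ) ∈ nhds (1:ℝ) := isOpen_Ioi.mem_nhds (by norm_num)
    filter_upwards [hmem] with x hx
    have hx0 : (0:ℝ) < x := hx
    have hr0 : (0:ℝ) < Real.sqrt x := Real.sqrt_pos.2 hx0
    have hD : HasDerivAt (fun y => Real.cos (Real.sqrt y))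
        (-Real.sin (Real.sqrt x) * (1 / (2 * Real.sqrt x))) x :=
      (Real.hasDerivAt_cos (Real.sqrt x)).comp x (Real.hasDerivAt_sqrt hx0.ne')
    have hEq : Cf =ᶠ[nhds x] (fun y => Real.cos (Real.sqrt y)) := by
      filter_upwards [isOpen_Ioi.mem_nhds hx] with y hy
      exact Cf_pos_eq hy
    rw [hEq.deriv_eq, hD.deriv, Sf_pos_eq hx0]
    field_simp

lemma deriv_Sf (s : ℝ) : 2 * s * deriv Sf s = Cf s - Sf s := by
  have h := AnalyticOnNhd.eqOn_of_preconnected_of_eventuallyEq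
    (f := fun s => 2 * s * deriv Sf s) (g := fun s => Cf s - Sf s)
    (((analyticOnNhd_const (v := (2:ℝ))).mul analyticOnNhd_id).mul (Sf_analytic.deriv))
    (Cf_analytic.sub Sf_analytic)
    isPreconnected_univ (Set.mem_univ (1:ℝ)) ?_
  · exact h (Set.mem_univ s)
  · have hmem : Set.Ioi (0:ℝ) ∈ nhds (1:ℝ) := isOpen_Ioi.mem_nhds (by norm_num)
    filter_upwards [hmem] with x hx
    have hx0 : (0:ℝ) < x := hx
    obtain ⟨r, hrpos, rfl⟩ : ∃ r : ℝ, 0 < r ∧ r^2 = x :=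
      ⟨Real.sqrt x, Real.sqrt_pos.2 hx0, Real.sq_sqrt hx0.le⟩
    have hsq : Real.sqrt (r^2) = r := Real.sqrt_sq hrpos.le
    have hr0 : (0:ℝ) < Real.sqrt (r^2) := by rw [hsq]; exact hrpos
    have h1 : HasDerivAt (fun y => Real.sin (Real.sqrt y))
        (Real.cos (Real.sqrt (r^2)) * (1 / (2 * Real.sqrt (r^2)))) (r^2) :=
      (Real.hasDerivAt_sin (Real.sqrt (r^2))).comp (r^2) (Real.hasDerivAt_sqrt hx0.ne')
    have h2 : HasDerivAt (fun y => (Real.sqrt y)⁻¹)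
        (-(1 / (2 * Real.sqrt (r^2))) / (Real.sqrt (r^2))^2) (r^2) :=
      (Real.hasDerivAt_sqrt hx0.ne').inv hr0.ne'
    have hD := h1.mul h2
    have hEq : Sf =ᶠ[nhds (r^2)] (fun y => Real.sin (Real.sqrt y) * (Real.sqrt y)⁻¹) := by
      filter_upwards [isOpen_Ioi.mem_nhds hx] with y hy
      rw [Sf_pos_eq hy, div_eq_mul_inv]
    show 2 * (r^2) * deriv Sf (r^2) = Cf (r^2) - Sf (r^2)
    rw [hEq.deriv_eq, HasDerivAt.deriv (f := fun y => Real.sin (Real.sqrt y) * (Real.sqrt y)⁻¹) hD, Sf_pos_eq hx0, Cf_pos_eq hx0, hsq]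
    field_simp
    ring

lemma neg_lt_sin {x : ℝ} (hx : 0 < x) : -x < Real.sin x := by
  by_cases h : x ≤ 1
  · have : 0 < Real.sin x :=
      Real.sin_pos_of_pos_of_lt_pi hx (by nlinarith [Real.pi_gt_three])
    linarith
  · linarith [Real.neg_one_le_sin x]

lemma quad_pos {w : ℝ} (hw : 0 ≤ w) : 0 < w * Sf w ^ 2 + Cf w * Sf w + Cf w ^ 2 := by
  rcases eq_or_lt_of_le hw with h | h
  · rw [← h, Cf_zero, Sf_zero]; norm_num
  · set r := Real.sqrt w with hr
    have hr0 : 0 < r := Real.sqrt_pos.2 h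
    have hrw : r ^ 2 = w := Real.sq_sqrt h.le
    have hC : Cf w = Real.cos r := Cf_pos_eq h
    have hS : Sf w = Real.sin r / r := Sf_pos_eq h
    have hrw2 : w = r^2 := hrw.symm
    have hsin1 : Real.sin r < r := Real.sin_lt hr0
    have hsin2 : -r < Real.sin r := neg_lt_sin hr0
    have hkey : -r < Real.sin r * Real.cos r := by
      by_cases hc : Real.cos r = 1
      · have hs0 : Real.sin r = 0 := by
          have h1 := Real.sin_sq_add_cos_sq r
          nlinarith
        rw [hs0, zero_mul]
        linarith
      · have hc1 : Real.cos r < 1 := lt_of_le_of_ne (Real.cos_le_one r) hc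
        have hcn : -1 ≤ Real.cos r := Real.neg_one_le_cos r
        nlinarith [mul_pos (by linarith : (0:ℝ) < r - Real.sin r)
            (by linarith : (0:ℝ) < 1 - Real.cos r),
          mul_nonneg (by linarith : (0:ℝ) ≤ r + Real.sin r)
            (by linarith : (0:ℝ) ≤ 1 + Real.cos r)]
    rw [hC, hS, hrw2]
    have h1 : r^2 * (Real.sin r / r)^2 = Real.sin r ^ 2 := by field_simp
    have hpy := Real.sin_sq_add_cos_sq r
    have h2 : Real.cos r * (Real.sin r / r) = (Real.sin r * Real.cos r) / r := by ring
    have h3 : -1 < (Real.sin r * Real.cos r) / r := by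
      rw [lt_div_iff₀ hr0]
      linarith
    rw [h1, h2]
    linarith

def W (u : ℝ) (p : V3) : ℝ := u ^ 2 * (p 0 ^ 2 + p 1 ^ 2)

def betaF (u : ℝ) (p : V3) : V3 →L[ℝ] ℝ :=
  Cf (W u p) • (ContinuousLinearMap.proj 2 : V3 →L[ℝ] ℝ)
    + Sf (W u p) • (p 0 • (ContinuousLinearMap.proj 1 : V3 →L[ℝ] ℝ)
        - p 1 • (ContinuousLinearMap.proj 0 : V3 →L[ℝ] ℝ))

lemma Cf_contDiff : ContDiff ℝ (⊤ : ℕ∞) Cf := Cf_analytic.contDiff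
lemma Sf_contDiff : ContDiff ℝ (⊤ : ℕ∞) Sf := Sf_analytic.contDiff

lemma betaF_smooth : ContDiff ℝ (⊤ : ℕ∞) (fun z : ℝ × V3 => betaF z.1 z.2) := by
  have h0 : ContDiff ℝ (⊤ : ℕ∞) (fun z : ℝ × V3 => z.2 0) :=
    (ContinuousLinearMap.proj 0 : V3 →L[ℝ] ℝ).contDiff.comp contDiff_snd
  have h1 : ContDiff ℝ (⊤ : ℕ∞) (fun z : ℝ × V3 => z.2 1) :=
    (ContinuousLinearMap.proj 1 : V3 →L[ℝ] ℝ).contDiff.comp contDiff_snd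
  have hW : ContDiff ℝ (⊤ : ℕ∞) (fun z : ℝ × V3 => W z.1 z.2) := by
    unfold W
    exact (contDiff_fst.pow 2).mul ((h0.pow 2).add (h1.pow 2))
  unfold betaF
  exact ((Cf_contDiff.comp hW).smul contDiff_const).add
    ((Sf_contDiff.comp hW).smul ((h0.smul contDiff_const).sub (h1.smul contDiff_const)))

lemma betaF_diff (u : ℝ) : Differentiable ℝ (betaF u) := by
  have := betaF_smooth.comp (ContDiff.prodMk (contDiff_const (c := u)) contDiff_id)
  exact this.differentiable (by simp)

lemma d2_eq {E : Type*} [NormedAddCommGroup E] [NormedSpace ℝ E]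
    (α : E → E →L[ℝ] ℝ) {x : E} (hα : DifferentiableAt ℝ α x) (v w : E) :
    d2 α x v w = fderiv ℝ (fun y => α y w) x v - fderiv ℝ (fun y => α y v) x w := by
  have h1 : ∀ u : E, fderiv ℝ (fun y => α y u) x = (fderiv ℝ α x).flip u := by
    intro u
    have := fderiv_clm_apply (𝕜 := ℝ) hα (differentiableAt_const u)
    simpa using this
  rw [d2, h1, h1]
  simp [ContinuousLinearMap.flip_apply]

lemma betaF_apply (u : ℝ) (p v : V3) :
    betaF u p v = Cf (W u p) * v 2 + Sf (W u p) * (p 0 * v 1 - p 1 * v 0) := by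
  simp [betaF, smul_eq_mul]

lemma e3_val : (e3 0 : V3) 0 = 1 ∧ (e3 0 : V3) 1 = 0 ∧ (e3 0 : V3) 2 = 0 ∧
    (e3 1 : V3) 0 = 0 ∧ (e3 1 : V3) 1 = 1 ∧ (e3 1 : V3) 2 = 0 ∧
    (e3 2 : V3) 0 = 0 ∧ (e3 2 : V3) 1 = 0 ∧ (e3 2 : V3) 2 = 1 := by
  refine ⟨?_, ?_, ?_, ?_, ?_, ?_, ?_, ?_, ?_⟩ <;> simp [e3, Pi.single_apply]

section FD
variable (u : ℝ) (p : V3)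

def DWe : V3 →L[ℝ] ℝ :=
  (u ^ 2 * (2 * p 0)) • (ContinuousLinearMap.proj 0 : V3 →L[ℝ] ℝ)
    + (u ^ 2 * (2 * p 1)) • (ContinuousLinearMap.proj 1 : V3 →L[ℝ] ℝ)

lemma hp0 : HasFDerivAt (fun q : V3 => q 0)
    (ContinuousLinearMap.proj 0 : V3 →L[ℝ] ℝ) p :=
  (ContinuousLinearMap.proj 0 : V3 →L[ℝ] ℝ).hasFDerivAt

lemma hp1 : HasFDerivAt (fun q : V3 => q 1)
    (ContinuousLinearMap.proj 1 : V3 →L[ℝ] ℝ) p :=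
  (ContinuousLinearMap.proj 1 : V3 →L[ℝ] ℝ).hasFDerivAt

lemma hWd : HasFDerivAt (W u) (DWe u p) p := by
  have h : HasFDerivAt (fun q : V3 => u ^ 2 * (q 0 * q 0 + q 1 * q 1)) _ p :=
    (((hp0 p).mul (hp0 p)).add ((hp1 p).mul (hp1 p))).const_mul (u ^ 2)
  have hWfun : W u = fun q : V3 => u ^ 2 * (q 0 * q 0 + q 1 * q 1) := by
    funext q; simp only [W]; ring
  rw [hWfun]
  refine h.congr_fderiv ?_
  refine ContinuousLinearMap.ext fun v => ?_
  simp only [DWe, ContinuousLinearMap.add_apply, ContinuousLinearMap.smul_apply,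
    ContinuousLinearMap.proj_apply, smul_eq_mul]
  ring

lemma hSd : HasFDerivAt (fun q : V3 => Sf (W u q)) (deriv Sf (W u p) • DWe u p) p :=
  ((Sf_analytic _ (Set.mem_univ (W u p))).differentiableAt.hasDerivAt).comp_hasFDerivAt p (hWd u p)

lemma hCd : HasFDerivAt (fun q : V3 => Cf (W u q)) (deriv Cf (W u p) • DWe u p) p :=
  ((Cf_analytic _ (Set.mem_univ (W u p))).differentiableAt.hasDerivAt).comp_hasFDerivAt p (hWd u p)

lemma comp0 : (fun q : V3 => betaF u q (e3 0)) = fun q : V3 => -(q 1 * Sf (W u q)) := by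
  funext q
  simp [betaF_apply, e3, Pi.single_apply]
  ring

lemma comp1 : (fun q : V3 => betaF u q (e3 1)) = fun q : V3 => q 0 * Sf (W u q) := by
  funext q
  simp [betaF_apply, e3, Pi.single_apply]
  ring

lemma comp2 : (fun q : V3 => betaF u q (e3 2)) = fun q : V3 => Cf (W u q) := by
  funext q
  simp [betaF_apply, e3, Pi.single_apply]

def D0 : V3 →L[ℝ] ℝ :=
  -(p 1 • (deriv Sf (W u p) • DWe u p) + Sf (W u p) • (ContinuousLinearMap.proj 1 : V3 →L[ℝ] ℝ))
def D1 : V3 →L[ℝ] ℝ :=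
  p 0 • (deriv Sf (W u p) • DWe u p) + Sf (W u p) • (ContinuousLinearMap.proj 0 : V3 →L[ℝ] ℝ)
def D2 : V3 →L[ℝ] ℝ := deriv Cf (W u p) • DWe u p

lemma hA0 : HasFDerivAt (fun q : V3 => -(q 1 * Sf (W u q))) (D0 u p) p :=
  ((hp1 p).mul (hSd u p)).neg

lemma hA1 : HasFDerivAt (fun q : V3 => q 0 * Sf (W u q)) (D1 u p) p :=
  (hp0 p).mul (hSd u p)

lemma hA2 : HasFDerivAt (fun q : V3 => Cf (W u q)) (D2 u p) p := hCd u p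

lemma c3_betaF : c3 (betaF u) p
    = W u p * Sf (W u p) ^ 2 + Cf (W u p) * Sf (W u p) + Cf (W u p) ^ 2 := by
  have hd : DifferentiableAt ℝ (betaF u) p := betaF_diff u p
  rw [c3, d2_eq _ hd, d2_eq _ hd, d2_eq _ hd, comp0, comp1, comp2,
    (hA0 u p).fderiv, (hA1 u p).fderiv, (hA2 u p).fderiv, betaF_apply, betaF_apply, betaF_apply]
  simp [D0, D1, D2, DWe, e3, Pi.single_apply, smul_eq_mul]
  have h1 := deriv_Sf (W u p)
  have h2 := deriv_Cf (W u p)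
  simp only [W] at h1 h2 ⊢
  linear_combination Cf (u ^ 2 * (p 0 ^ 2 + p 1 ^ 2)) * h1
    - 2 * (u ^ 2 * (p 0 ^ 2 + p 1 ^ 2)) * Sf (u ^ 2 * (p 0 ^ 2 + p 1 ^ 2)) * h2

end FD

lemma b4_0 : b4 0 = (e3 0, 0) := rfl
lemma b4_1 : b4 1 = (e3 1, 0) := rfl
lemma b4_2 : b4 2 = (e3 2, 0) := rfl
lemma b4_3 : b4 3 = ((0 : V3), 1) := rfl

lemma sympl1_smooth (u : ℝ) : ContDiff ℝ (⊤ : ℕ∞) (sympl1 (betaF u)) := by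
  have hβ : ContDiff ℝ (⊤ : ℕ∞) (betaF u) :=
    betaF_smooth.comp (ContDiff.prodMk (contDiff_const (c := u)) contDiff_id)
  have h1 : ContDiff ℝ (⊤ : ℕ∞) (fun z : V3 × ℝ =>
      (betaF u z.1).comp (ContinuousLinearMap.fst ℝ V3 ℝ)) :=
    (((ContinuousLinearMap.compL ℝ (V3 × ℝ) V3 ℝ).flip
      (ContinuousLinearMap.fst ℝ V3 ℝ)).contDiff).comp (hβ.comp contDiff_fst)
  exact ((Real.contDiff_exp.comp contDiff_snd).smul h1)

section SY
variable (u : ℝ) (z : V3 × ℝ)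

lemma L0 : (fun y : V3 × ℝ => sympl1 (betaF u) y (b4 0))
    = fun y => Real.exp y.2 * -(y.1 1 * Sf (W u y.1)) := by
  funext y
  simp [sympl1, b4_0, betaF_apply, e3, Pi.single_apply]
  ring

lemma L1 : (fun y : V3 × ℝ => sympl1 (betaF u) y (b4 1))
    = fun y => Real.exp y.2 * (y.1 0 * Sf (W u y.1)) := by
  funext y
  simp [sympl1, b4_1, betaF_apply, e3, Pi.single_apply]
  ring

lemma L2 : (fun y : V3 × ℝ => sympl1 (betaF u) y (b4 2))
    = fun y => Real.exp y.2 * Cf (W u y.1) := by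
  funext y
  simp [sympl1, b4_2, betaF_apply, e3, Pi.single_apply]

lemma L3 : (fun y : V3 × ℝ => sympl1 (betaF u) y (b4 3)) = fun _ => (0 : ℝ) := by
  funext y
  simp [sympl1, b4_3, betaF_apply]

lemma hE : HasFDerivAt (fun y : V3 × ℝ => Real.exp y.2)
    (Real.exp z.2 • ContinuousLinearMap.snd ℝ V3 ℝ) z :=
  (Real.hasDerivAt_exp z.2).comp_hasFDerivAt z (ContinuousLinearMap.snd ℝ V3 ℝ).hasFDerivAt

lemma hG0 : HasFDerivAt (fun y : V3 × ℝ => Real.exp y.2 * -(y.1 1 * Sf (W u y.1)))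
    (Real.exp z.2 • ((D0 u z.1).comp (ContinuousLinearMap.fst ℝ V3 ℝ))
      + (-(z.1 1 * Sf (W u z.1))) • (Real.exp z.2 • ContinuousLinearMap.snd ℝ V3 ℝ)) z :=
  (hE z).mul ((hA0 u z.1).comp z (ContinuousLinearMap.fst ℝ V3 ℝ).hasFDerivAt)

lemma hG1 : HasFDerivAt (fun y : V3 × ℝ => Real.exp y.2 * (y.1 0 * Sf (W u y.1)))
    (Real.exp z.2 • ((D1 u z.1).comp (ContinuousLinearMap.fst ℝ V3 ℝ))
      + (z.1 0 * Sf (W u z.1)) • (Real.exp z.2 • ContinuousLinearMap.snd ℝ V3 ℝ)) z :=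
  (hE z).mul ((hA1 u z.1).comp z (ContinuousLinearMap.fst ℝ V3 ℝ).hasFDerivAt)

lemma hG2 : HasFDerivAt (fun y : V3 × ℝ => Real.exp y.2 * Cf (W u y.1))
    (Real.exp z.2 • ((D2 u z.1).comp (ContinuousLinearMap.fst ℝ V3 ℝ))
      + (Cf (W u z.1)) • (Real.exp z.2 • ContinuousLinearMap.snd ℝ V3 ℝ)) z :=
  (hE z).mul ((hA2 u z.1).comp z (ContinuousLinearMap.fst ℝ V3 ℝ).hasFDerivAt)

lemma symp4_betaF : symp4val (sympl1 (betaF u)) z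
    = -(Real.exp z.2 * Real.exp z.2)
        * (W u z.1 * Sf (W u z.1) ^ 2 + Cf (W u z.1) * Sf (W u z.1) + Cf (W u z.1) ^ 2) := by
  have hΛd : DifferentiableAt ℝ (sympl1 (betaF u)) z :=
    ((sympl1_smooth u).differentiable (by simp)) z
  rw [symp4val, d2_eq _ hΛd, d2_eq _ hΛd, d2_eq _ hΛd, d2_eq _ hΛd, d2_eq _ hΛd, d2_eq _ hΛd,
    L0, L1, L2, L3, (hG0 u z).fderiv, (hG1 u z).fderiv, (hG2 u z).fderiv]
  simp [D0, D1, D2, DWe, b4_0, b4_1, b4_2, b4_3, e3, Pi.single_apply, smul_eq_mul]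
  have h1 := deriv_Sf (W u z.1)
  have h2 := deriv_Cf (W u z.1)
  simp only [W] at h1 h2 ⊢
  linear_combination (-(Real.exp z.2 * Real.exp z.2))
    * (Cf (u ^ 2 * (z.1 0 ^ 2 + z.1 1 ^ 2)) * h1
      - 2 * (u ^ 2 * (z.1 0 ^ 2 + z.1 1 ^ 2)) * Sf (u ^ 2 * (z.1 0 ^ 2 + z.1 1 ^ 2)) * h2)

end SY


lemma betaF_zero (p : V3) : betaF 0 p = alpha0 p := by
  have h : W 0 p = 0 := by simp [W]
  rw [betaF, h, Cf_zero, Sf_zero, one_smul, one_smul, alpha0, add_sub_assoc]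

lemma betaF_one (p : V3) : betaF 1 p = alpha1 p := by
  have hq : (0:ℝ) ≤ p 0 ^ 2 + p 1 ^ 2 := by positivity
  have h1 : W 1 p = p 0 ^ 2 + p 1 ^ 2 := by simp [W]
  have hc : Cf (p 0 ^ 2 + p 1 ^ 2) = Real.cos (Real.sqrt (p 0 ^ 2 + p 1 ^ 2)) := by
    have := Cf_sq (Real.sqrt (p 0 ^ 2 + p 1 ^ 2))
    rwa [Real.sq_sqrt hq] at this
  have hs : Sf (p 0 ^ 2 + p 1 ^ 2) = sinc (Real.sqrt (p 0 ^ 2 + p 1 ^ 2)) := by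
    rcases eq_or_lt_of_le hq with h | h
    · rw [← h, Real.sqrt_zero]
      simp [sinc, Sf_zero]
    · rw [Sf_pos_eq h, sinc, if_neg (Real.sqrt_pos.2 h).ne']
  rw [betaF, alpha1, h1, hc, hs]


theorem standard_and_overtwisted_homotopic_through_contact_structures :
    ∃ β : ℝ → V3 → V3 →L[ℝ] ℝ,
      -- a smooth family of 1-forms
      ContDiff ℝ (⊤ : ℕ∞) (fun z : ℝ × V3 => β z.1 z.2) ∧
      -- each β_u, u ∈ [0,1], is a contact form
      (∀ u ∈ Set.Icc (0 : ℝ) 1, ∀ p : V3, c3 (β u) p ≠ 0) ∧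
      -- with ker β₀ = ξ₀ and ker β₁ = ξ₁
      (∀ p : V3, {v : V3 | β 0 p v = 0} = {v : V3 | alpha0 p v = 0}) ∧
      (∀ p : V3, {v : V3 | β 1 p v = 0} = {v : V3 | alpha1 p v = 0}) ∧
      -- consequently d(e^t β_u) is a path of exact symplectic forms on ℝ⁴
      (∀ u ∈ Set.Icc (0 : ℝ) 1, ∀ z : V3 × ℝ, symp4val (sympl1 (β u)) z ≠ 0) := by
  refine ⟨betaF, betaF_smooth, ?_, ?_, ?_, ?_⟩
  · intro u _ p
    rw [c3_betaF]
    have hw : 0 ≤ W u p := by simp only [W]; positivity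
    exact (quad_pos hw).ne'
  · intro p; rw [betaF_zero]
  · intro p; rw [betaF_one]
  · intro u _ z
    rw [symp4_betaF]
    have hw : 0 ≤ W u z.1 := by simp only [W]; positivity
    have h := quad_pos hw
    have he : 0 < Real.exp z.2 * Real.exp z.2 := by positivity
    nlinarith
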